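/- arXiv:1706.09446 — 2 statements merged into one kernel-verified Lean document; each statement's English description precedes it below -/
import Mathlib

section
/- Let ‖·‖ be a norm on ℝⁿ with b = max{‖θ‖ : ‖θ‖₂ = 1}, and let x₀* with ‖x₀*‖₂ = b and ‖x₀*‖_* = 1 (dual norm 1). For t > 0, define f_t(x) = ‖x‖ + t |⟨x, x₀*⟩|. Then: (a) ‖x‖ ≤ f_t(x) ≤ (1+t)‖x‖ for all x; (b) max{f_t(θ) : ‖θ‖₂ = 1} = (1+t) b = Lip(f_t); (c) for Z ∼ N(0, Iₙ), E f_t(Z) = b√(k(X)) + t b √(2/π), where k(X) = (E‖Z‖ / b)². -/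
open MeasureTheory ProbabilityTheory Real
open scoped RealInnerProductSpace ENNReal NNReal
open Set Function Filter

/-- The standard Gaussian measure on `ℝⁿ`. -/
noncomputable def stdGaussian (n : ℕ) : Measure (EuclideanSpace ℝ (Fin n)) :=
  Measure.map (WithLp.toLp 2 : (Fin n → ℝ) → EuclideanSpace ℝ (Fin n))
    (Measure.pi fun _ => gaussianReal 0 1)


lemma aux_lintegral_pi {n : ℕ} (μ : Measure ℝ) [SigmaFinite μ] (f : Fin n → ℝ → ℝ≥0∞)
    (hf : ∀ i, Measurable (f i)) :
    ∫⁻ z : Fin n → ℝ, ∏ i, f i (z i) ∂(Measure.pi fun _ => μ) = ∏ i, ∫⁻ x, f i x ∂μ := by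
  induction n with
  | zero => simp
  | succ n ih =>
      set e := MeasurableEquiv.piFinSuccAbove (fun _ : Fin (n+1) => ℝ) 0 with he
      have hmp := measurePreserving_piFinSuccAbove (fun _ : Fin (n+1) => μ) 0
      set G : ℝ × (Fin n → ℝ) → ℝ≥0∞ := fun p => f 0 p.1 * ∏ i : Fin n, f i.succ (p.2 i) with hG
      have hGm : Measurable G := ((hf 0).comp measurable_fst).mul <| Finset.measurable_prod _
        fun i _ => (hf i.succ).comp ((measurable_pi_apply i).comp measurable_snd)
      calc ∫⁻ z : Fin (n+1) → ℝ, ∏ i, f i (z i) ∂(Measure.pi fun _ => μ)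
          = ∫⁻ z, G (e z) ∂(Measure.pi fun _ => μ) := by
            refine lintegral_congr fun z => ?_
            simp only [hG, he, MeasurableEquiv.piFinSuccAbove_apply]
            rw [Fin.prod_univ_succ]
            simp [Fin.removeNth, Fin.zero_succAbove, Fin.tail]
        _ = ∫⁻ p, G p ∂(Measure.map e (Measure.pi fun _ => μ)) :=
            (lintegral_map hGm e.measurable).symm
        _ = ∫⁻ p, G p ∂((μ).prod (Measure.pi fun _ => μ)) := by rw [hmp.map_eq]
        _ = (∫⁻ x, f 0 x ∂μ) * ∫⁻ w : Fin n → ℝ, ∏ i, f i.succ (w i) ∂(Measure.pi fun _ => μ) :=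
            lintegral_prod_mul (f := f 0) (g := fun w : Fin n → ℝ => ∏ i, f i.succ (w i)) (hf 0).aemeasurable
              (Finset.measurable_prod _ fun i _ =>
                (hf i.succ).comp (measurable_pi_apply i)).aemeasurable
        _ = (∫⁻ x, f 0 x ∂μ) * ∏ i : Fin n, ∫⁻ x, f i.succ x ∂μ := by
            rw [ih (fun i => f i.succ) (fun i => hf i.succ)]
        _ = ∏ i, ∫⁻ x, f i x ∂μ := by rw [Fin.prod_univ_succ]


lemma aux_volume_euclidean (n : ℕ) :
    (volume : Measure (EuclideanSpace ℝ (Fin n))) = Measure.map (WithLp.toLp 2 : (Fin n → ℝ) → EuclideanSpace ℝ (Fin n)) (Measure.pi fun _ => (volume : Measure ℝ)) := by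
  rw [(PiLp.volume_preserving_toLp (Fin n)).map_eq.symm, volume_pi]

lemma aux_indicator_pi {n : ℕ} (s : Fin n → Set ℝ) (f : ℝ → ℝ≥0∞) (z : Fin n → ℝ) :
    (Set.univ.pi s).indicator (fun z : Fin n → ℝ => ∏ i, f (z i)) z
      = ∏ i, (s i).indicator f (z i) := by
  by_cases hz : z ∈ Set.univ.pi s
  · rw [Set.indicator_of_mem hz]
    exact Finset.prod_congr rfl fun i _ => (Set.indicator_of_mem (hz i trivial) _).symm
  · rw [Set.indicator_of_notMem hz]
    simp only [Set.mem_pi, Set.mem_univ, forall_true_left, not_forall] at hz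
    obtain ⟨i, hi⟩ := hz
    exact (Finset.prod_eq_zero (Finset.mem_univ i)
      (by rw [Set.indicator_of_notMem (by simpa using hi)])).symm

lemma aux_stdGaussian_eq (n : ℕ) :
    stdGaussian n = (volume : Measure (EuclideanSpace ℝ (Fin n))).withDensity
      (fun z => ∏ i, gaussianPDF 0 1 (z i)) := by
  have key : Measure.pi (fun _ : Fin n => gaussianReal 0 1)
      = ((Measure.pi fun _ : Fin n => (volume : Measure ℝ)).withDensity
      fun z => ∏ i, gaussianPDF 0 1 (z i)) := by
    refine Measure.pi_eq (μ := fun _ : Fin n => gaussianReal 0 1) fun s hs => ?_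
    rw [withDensity_apply _ (MeasurableSet.univ_pi hs),
      ← lintegral_indicator (MeasurableSet.univ_pi hs)]
    have hind : ∀ z : Fin n → ℝ,
        (Set.univ.pi s).indicator (fun z => ∏ i, gaussianPDF 0 1 (z i)) z
        = ∏ i, (s i).indicator (gaussianPDF 0 1) (z i) := aux_indicator_pi s _
    rw [lintegral_congr hind,
      aux_lintegral_pi volume _ (fun i => (measurable_gaussianPDF 0 1).indicator (hs i))]
    refine Finset.prod_congr rfl fun i _ => ?_
    rw [lintegral_indicator (hs i), gaussianReal_of_var_ne_zero 0 one_ne_zero,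
      withDensity_apply _ (hs i)]
  rw [aux_volume_euclidean, _root_.stdGaussian, key]
  refine Measure.ext fun s hs => ?_
  have hgm : Measurable (fun z : EuclideanSpace ℝ (Fin n) => ∏ i, gaussianPDF 0 1 (z i)) :=
    Finset.measurable_prod _ fun i _ =>
      (measurable_gaussianPDF 0 1).comp ((measurable_pi_apply i).comp (WithLp.measurable_ofLp _ _))
  rw [Measure.map_apply (WithLp.measurable_toLp _ _) hs,
    withDensity_apply _ (hs.preimage (WithLp.measurable_toLp _ _)), withDensity_apply _ hs,
    setLIntegral_map hs hgm (WithLp.measurable_toLp _ _)]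

lemma aux_map_eval (n : ℕ) (i : Fin n) :
    Measure.map (fun z : EuclideanSpace ℝ (Fin n) => z i) (stdGaussian n) = gaussianReal 0 1 := by
  rw [_root_.stdGaussian, Measure.map_map (show Measurable (fun z : EuclideanSpace ℝ (Fin n) => z i)
      from (measurable_pi_apply i).comp (WithLp.measurable_ofLp _ _))
    (WithLp.measurable_toLp _ _)]
  exact (measurePreserving_eval (fun _ : Fin n => gaussianReal 0 1) i).map_eq

lemma aux_pdf_prod {n : ℕ} (z : EuclideanSpace ℝ (Fin n)) :
    ∏ i, gaussianPDFReal 0 1 (z i)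
      = (Real.sqrt (2 * π))⁻¹ ^ n * Real.exp (-‖z‖ ^ 2 / 2) := by
  have hz : ∑ i, (z i) ^ 2 = ‖z‖ ^ 2 := by
    rw [EuclideanSpace.norm_eq, Real.sq_sqrt (by positivity)]
    simp [Real.norm_eq_abs, sq_abs]
  simp only [gaussianPDFReal, NNReal.coe_one, mul_one, sub_zero]
  rw [Finset.prod_mul_distrib, Finset.prod_const, Finset.card_univ, Fintype.card_fin,
    ← Real.exp_sum]
  congr 1
  rw [← hz, neg_div, ← Finset.sum_div]
  simp [neg_div]

lemma aux_invariance {n : ℕ}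
    (f : EuclideanSpace ℝ (Fin n) ≃ₗᵢ[ℝ] EuclideanSpace ℝ (Fin n)) :
    Measure.map f (stdGaussian n) = stdGaussian n := by
  set g : EuclideanSpace ℝ (Fin n) → ℝ≥0∞ := fun z => ∏ i, gaussianPDF 0 1 (z i) with hgdef
  have hgm : Measurable g := Finset.measurable_prod _ fun i _ =>
    (measurable_gaussianPDF 0 1).comp ((measurable_pi_apply i).comp (WithLp.measurable_ofLp _ _))
  have hg : ∀ z, g (f z) = g z := by
    intro z
    have h1 : ∀ w : EuclideanSpace ℝ (Fin n), g w
        = ENNReal.ofReal ((Real.sqrt (2 * π))⁻¹ ^ n * Real.exp (-‖w‖ ^ 2 / 2)) := by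
      intro w
      rw [hgdef]
      simp only [gaussianPDF]
      rw [← ENNReal.ofReal_prod_of_nonneg (fun i _ => gaussianPDFReal_nonneg 0 1 (w i)),
        aux_pdf_prod]
    rw [h1, h1, f.norm_map]
  refine Measure.ext fun s hs => ?_
  rw [Measure.map_apply f.continuous.measurable hs, aux_stdGaussian_eq,
    withDensity_apply _ (hs.preimage f.continuous.measurable), withDensity_apply _ hs,
    ← lintegral_indicator (hs.preimage f.continuous.measurable), ← lintegral_indicator hs]
  have hcomp : ∀ z, (⇑f ⁻¹' s).indicator g z = (s.indicator g) (f z) := by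
    intro z
    by_cases h : f z ∈ s
    · simp [Set.indicator, Set.mem_preimage, h, hg]
    · simp [Set.indicator, Set.mem_preimage, h]
  calc ∫⁻ z, (⇑f ⁻¹' s).indicator g z ∂volume
      = ∫⁻ z, (s.indicator g) (f z) ∂volume := lintegral_congr hcomp
    _ = ∫⁻ w, s.indicator g w ∂(Measure.map f volume) :=
        (lintegral_map (hgm.indicator hs) f.continuous.measurable).symm
    _ = ∫⁻ w, s.indicator g w ∂volume := by rw [f.measurePreserving.map_eq]

lemma aux_Ioi_integrable :
    MeasureTheory.IntegrableOn (fun x : ℝ => x * Real.exp (-x ^ 2 / 2)) (Set.Ioi 0) := by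
  have h : (fun x : ℝ => x * Real.exp (-x ^ 2 / 2))
      = fun x : ℝ => x * Real.exp (-(1/2) * x ^ 2) := by
    funext x; congr 1; ring_nf
  rw [h]
  exact (integrable_mul_exp_neg_mul_sq one_half_pos).integrableOn

lemma aux_Ioi : ∫ x in Set.Ioi (0:ℝ), x * Real.exp (-x ^ 2 / 2) = 1 := by
  have hderiv : ∀ x ∈ Set.Ici (0:ℝ),
      HasDerivAt (fun y : ℝ => -Real.exp (-y ^ 2 / 2)) (x * Real.exp (-x ^ 2 / 2)) x := by
    intro x _
    have h1 : HasDerivAt (fun y : ℝ => -y ^ 2 / 2) (-x) x := by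
      have := (((hasDerivAt_pow 2 x)).neg).div_const 2
      exact this.congr_deriv (by push_cast; ring)
    have := (h1.exp).neg
    exact this.congr_deriv (by ring)
  have htends : Filter.Tendsto (fun y : ℝ => -Real.exp (-y ^ 2 / 2)) Filter.atTop (nhds 0) := by
    rw [show (0:ℝ) = -0 from (neg_zero).symm]
    refine Filter.Tendsto.neg (Real.tendsto_exp_atBot.comp ?_)
    have h2 : Filter.Tendsto (fun y : ℝ => -y ^ 2) Filter.atTop Filter.atBot :=
      Filter.tendsto_neg_atTop_atBot.comp (Filter.tendsto_pow_atTop two_ne_zero)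
    exact h2.atBot_div_const (by norm_num : (0:ℝ) < 2)
  have := integral_Ioi_of_hasDerivAt_of_tendsto' hderiv aux_Ioi_integrable htends
  simpa using this

lemma aux_abs_helper : ∀ x : ℝ,
    (Real.toNNReal (gaussianPDFReal 0 1 x)) • |x|
      = (Real.sqrt (2 * π))⁻¹ * (|x| * Real.exp (-|x| ^ 2 / 2)) := by
  intro x
  rw [NNReal.smul_def, Real.coe_toNNReal _ (gaussianPDFReal_nonneg 0 1 x)]
  simp only [gaussianPDFReal, NNReal.coe_one, mul_one, sub_zero, smul_eq_mul]
  rw [sq_abs]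
  ring

lemma aux_gaussian_repr : gaussianReal 0 1
    = (volume : Measure ℝ).withDensity
      (fun x => ((Real.toNNReal (gaussianPDFReal 0 1 x) : ℝ≥0) : ℝ≥0∞)) := by
  rw [gaussianReal_of_var_ne_zero 0 one_ne_zero]; rfl

lemma aux_abs_integrable : MeasureTheory.Integrable (fun x : ℝ => |x|) (gaussianReal 0 1) := by
  rw [aux_gaussian_repr,
    integrable_withDensity_iff_integrable_smul (measurable_gaussianPDFReal 0 1).real_toNNReal]
  have heq : (fun x : ℝ => (Real.toNNReal (gaussianPDFReal 0 1 x)) • |x|)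
      = fun x : ℝ => (Real.sqrt (2 * π))⁻¹ * |x * Real.exp (-(1/2) * x ^ 2)| := by
    funext x
    rw [aux_abs_helper x, abs_mul, abs_of_nonneg (Real.exp_pos _).le]
    congr 2
    rw [sq_abs]; ring_nf
  rw [heq]
  exact (integrable_mul_exp_neg_mul_sq one_half_pos).abs.const_mul _

lemma aux_abs_gaussian : ∫ x, |x| ∂gaussianReal 0 1 = Real.sqrt (2 / π) := by
  rw [aux_gaussian_repr,
    integral_withDensity_eq_integral_smul (measurable_gaussianPDFReal 0 1).real_toNNReal]
  have heq : (fun x : ℝ => (Real.toNNReal (gaussianPDFReal 0 1 x)) • |x|)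
      = fun x : ℝ => (Real.sqrt (2 * π))⁻¹ * (|x| * Real.exp (-|x| ^ 2 / 2)) := by
    funext x; exact aux_abs_helper x
  rw [heq]
  have hca : ∫ x : ℝ, (Real.sqrt (2 * π))⁻¹ * (|x| * Real.exp (-|x| ^ 2 / 2))
      = 2 * ∫ x in Set.Ioi (0:ℝ), (Real.sqrt (2 * π))⁻¹ * (x * Real.exp (-x ^ 2 / 2)) :=
    integral_comp_abs (f := fun y => (Real.sqrt (2 * π))⁻¹ * (y * Real.exp (-y ^ 2 / 2)))
  rw [hca, MeasureTheory.integral_const_mul, aux_Ioi, mul_one]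
  have hπ := Real.pi_pos
  have h1 : Real.sqrt (2*π) = Real.sqrt 2 * Real.sqrt π := Real.sqrt_mul (by norm_num) π
  have h2 : Real.sqrt (2/π) = Real.sqrt 2 / Real.sqrt π := Real.sqrt_div (by norm_num) π
  have h3 : Real.sqrt 2 * Real.sqrt 2 = 2 := Real.mul_self_sqrt (by norm_num)
  have h4 : (0:ℝ) < Real.sqrt π := Real.sqrt_pos.mpr hπ
  have h5 : (0:ℝ) < Real.sqrt 2 := Real.sqrt_pos.mpr (by norm_num)
  rw [h2, h1]
  field_simp
  nlinarith [h3]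

open scoped RealInnerProductSpace

instance aux_prob (n : ℕ) : MeasureTheory.IsProbabilityMeasure (stdGaussian n) := by
  constructor
  have h : (Measure.pi fun _ : Fin n => gaussianReal 0 1) Set.univ = 1 := by
    rw [Measure.pi_univ]; simp
  rw [_root_.stdGaussian, Measure.map_apply (WithLp.measurable_toLp _ _) MeasurableSet.univ, Set.preimage_univ]
  exact h

lemma aux_inner_map {n : ℕ} (u : EuclideanSpace ℝ (Fin n)) (hu : ‖u‖ = 1) :
    Measure.map (fun z => ⟪z, u⟫) (stdGaussian n) = gaussianReal 0 1 := by
  have hne : n ≠ 0 := by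
    rintro rfl
    have : u = 0 := Subsingleton.elim u 0
    rw [this, norm_zero] at hu
    norm_num at hu
  let i0 : Fin n := ⟨0, Nat.pos_of_ne_zero hne⟩
  have hcard : Module.finrank ℝ (EuclideanSpace ℝ (Fin n)) = Fintype.card (Fin n) := by
    simp [finrank_euclideanSpace]
  have horth : Orthonormal ℝ (Set.restrict {i0} (fun _ : Fin n => u)) := by
    constructor
    · intro i; exact hu
    · intro i j hij
      exact absurd (Subtype.ext ((i.2 : i.1 = i0).trans (j.2 : j.1 = i0).symm)) hij
  obtain ⟨B, hB⟩ := horth.exists_orthonormalBasis_extension_of_card_eq hcard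
  have hBu : B i0 = u := hB i0 rfl
  have hmap : (fun z : EuclideanSpace ℝ (Fin n) => ⟪z, u⟫)
      = (fun w : EuclideanSpace ℝ (Fin n) => w i0) ∘ ⇑(B.repr) := by
    funext z
    simp only [Function.comp_apply]
    rw [show (B.repr z) i0 = _ from B.repr_apply_apply z i0, hBu, real_inner_comm]
  rw [hmap, ← Measure.map_map (show Measurable (fun w : EuclideanSpace ℝ (Fin n) => w i0) from (measurable_pi_apply i0).comp (WithLp.measurable_ofLp _ _)) B.repr.continuous.measurable,
    aux_invariance B.repr, aux_map_eval]

lemma aux_inner_integral {n : ℕ} (u : EuclideanSpace ℝ (Fin n)) (hu : ‖u‖ = 1) :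
    ∫ z, |⟪z, u⟫| ∂stdGaussian n = Real.sqrt (2 / π) := by
  have hφ : Measurable (fun z : EuclideanSpace ℝ (Fin n) => ⟪z, u⟫) :=
    (continuous_id.inner continuous_const).measurable
  have h := MeasureTheory.integral_map (f := fun y : ℝ => |y|) hφ.aemeasurable
    continuous_abs.aestronglyMeasurable (μ := stdGaussian n)
  rw [aux_inner_map u hu, aux_abs_gaussian] at h
  exact h.symm

lemma aux_coord_integrable {n : ℕ} (i : Fin n) :
    MeasureTheory.Integrable (fun z : EuclideanSpace ℝ (Fin n) => |z i|) (stdGaussian n) := by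
  have h := aux_abs_integrable
  rw [← aux_map_eval n i] at h
  rw [MeasureTheory.integrable_map_measure continuous_abs.aestronglyMeasurable
    (show Measurable (fun z : EuclideanSpace ℝ (Fin n) => z i) from
      (measurable_pi_apply i).comp (WithLp.measurable_ofLp _ _)).aemeasurable] at h
  exact h

lemma aux_norm_le_sum {n : ℕ} (z : EuclideanSpace ℝ (Fin n)) : ‖z‖ ≤ ∑ i, |z i| := by
  rw [EuclideanSpace.norm_eq]
  have h1 : ∑ i, ‖z i‖ ^ 2 ≤ (∑ i, ‖z i‖) ^ 2 :=
    Finset.sum_sq_le_sq_sum_of_nonneg (fun i _ => norm_nonneg _)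
  calc Real.sqrt (∑ i, ‖z i‖ ^ 2) ≤ Real.sqrt ((∑ i, ‖z i‖) ^ 2) := Real.sqrt_le_sqrt h1
    _ = ∑ i, ‖z i‖ := Real.sqrt_sq (Finset.sum_nonneg fun i _ => norm_nonneg _)
    _ = ∑ i, |z i| := by simp [Real.norm_eq_abs]


/-- Basic properties of the tilted norm `f_t(x) = ‖x‖ + t|⟨x, x₀*⟩|`, where `ν = ‖·‖`
is a norm on `ℝⁿ` with `b = max{ν θ : ‖θ‖₂ = 1}` and `x₀*` has dual norm one
(`|⟨x, x₀*⟩| ≤ ν x` for all `x`) and `‖x₀*‖₂ = b`: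
(a) `ν x ≤ f_t(x) ≤ (1+t) ν x`;
(b) `max{f_t(θ) : ‖θ‖₂ = 1} = (1+t) b` and `f_t` is `(1+t)b`-Lipschitz;
(c) `E f_t(Z) = b √(k(X)) + t b √(2/π)` with `k(X) = (E ν(Z) / b)²`. -/
theorem stmt13 (n : ℕ) (ν : EuclideanSpace ℝ (Fin n) → ℝ) (b : ℝ)
    (hadd : ∀ x y, ν (x + y) ≤ ν x + ν y)
    (hsmul : ∀ (c : ℝ) x, ν (c • x) = |c| * ν x)
    (hdef : ∀ x, ν x = 0 → x = 0)
    (hb : IsGreatest (ν '' {θ | ‖θ‖ = 1}) b)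
    (xstar : EuclideanSpace ℝ (Fin n))
    (hxs : ‖xstar‖ = b)
    (hdual : ∀ x, |⟪x, xstar⟫| ≤ ν x)
    (t : ℝ) (ht : 0 < t) :
    (∀ x, ν x ≤ ν x + t * |⟪x, xstar⟫| ∧ ν x + t * |⟪x, xstar⟫| ≤ (1 + t) * ν x) ∧
    (IsGreatest ((fun θ => ν θ + t * |⟪θ, xstar⟫|) '' {θ | ‖θ‖ = 1}) ((1 + t) * b) ∧
      LipschitzWith (Real.toNNReal ((1 + t) * b)) (fun x => ν x + t * |⟪x, xstar⟫|)) ∧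
    (∫ z, (ν z + t * |⟪z, xstar⟫|) ∂stdGaussian n =
      b * Real.sqrt (((∫ z, ν z ∂stdGaussian n) / b) ^ 2) + t * b * Real.sqrt (2 / π)) := by
  -- basic facts
  have hν0 : ν 0 = 0 := by
    have := hsmul 0 0
    simpa using this
  have hνnonneg : ∀ x, 0 ≤ ν x := by
    intro x
    have h1 : ν (x + (-x)) ≤ ν x + ν (-x) := hadd x (-x)
    have h2 : ν (-x) = ν x := by
      have := hsmul (-1) x
      simpa using this
    rw [add_neg_cancel, hν0, h2] at h1
    linarith
  have hbpos : 0 < b := by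
    obtain ⟨θ, hθ, hθb⟩ := hb.1
    rcases eq_or_lt_of_le (hνnonneg θ) with h | h
    · exfalso
      have h0 : θ = 0 := hdef θ h.symm
      have h1 : ‖θ‖ = 1 := hθ
      rw [h0, norm_zero] at h1
      norm_num at h1
    · rw [← hθb]; exact h
  have hνb : ∀ z, ν z ≤ b * ‖z‖ := by
    intro z
    rcases eq_or_ne z 0 with rfl | hz
    · simp [hν0]
    · have hnz : (0:ℝ) < ‖z‖ := norm_pos_iff.mpr hz
      have hmem : ν (‖z‖⁻¹ • z) ≤ b := hb.2 ⟨‖z‖⁻¹ • z, by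
        simp [norm_smul, abs_of_pos (inv_pos.mpr hnz), inv_mul_cancel₀ hnz.ne'], rfl⟩
      rw [hsmul, abs_of_pos (inv_pos.mpr hnz)] at hmem
      calc ν z = ‖z‖ * (‖z‖⁻¹ * ν z) := by field_simp
        _ ≤ ‖z‖ * b := by
            refine mul_le_mul_of_nonneg_left hmem hnz.le
        _ = b * ‖z‖ := mul_comm _ _
  have hνsub : ∀ x y, |ν x - ν y| ≤ b * ‖x - y‖ := by
    intro x y
    rw [abs_sub_le_iff]
    constructor
    · have h1 : ν x ≤ ν (x - y) + ν y := by
        have := hadd (x - y) y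
        simpa using this
      have := hνb (x - y)
      linarith
    · have h1 : ν y ≤ ν (y - x) + ν x := by
        have := hadd (y - x) x
        simpa using this
      have h2 : ν (y - x) = ν (x - y) := by
        have := hsmul (-1) (x - y)
        simpa [neg_sub] using this
      have := hνb (x - y)
      linarith
  -- part (a)
  have parta : ∀ x, ν x ≤ ν x + t * |⟪x, xstar⟫| ∧ ν x + t * |⟪x, xstar⟫| ≤ (1 + t) * ν x := by
    intro x
    constructor
    · exact le_add_of_nonneg_right (mul_nonneg ht.le (abs_nonneg _))
    · have := hdual x
      nlinarith
  -- u, the normalized xstar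
  set u : EuclideanSpace ℝ (Fin n) := b⁻¹ • xstar with hu_def
  have hbu : b • u = xstar := by
    rw [hu_def, smul_smul, mul_inv_cancel₀ hbpos.ne', one_smul]
  have hu : ‖u‖ = 1 := by
    rw [hu_def, norm_smul, hxs, Real.norm_eq_abs, abs_of_pos (inv_pos.mpr hbpos),
      inv_mul_cancel₀ hbpos.ne']
  have hinner_u : ⟪u, xstar⟫ = b := by
    rw [hu_def, real_inner_smul_left, real_inner_self_eq_norm_sq, hxs]
    field_simp
  have hνu : ν u = b := by
    refine le_antisymm (hb.2 ⟨u, hu, rfl⟩) ?_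
    have := hdual u
    rw [hinner_u, abs_of_pos hbpos] at this
    exact this
  -- part (b)
  have partb1 : IsGreatest ((fun θ => ν θ + t * |⟪θ, xstar⟫|) '' {θ | ‖θ‖ = 1}) ((1 + t) * b) := by
    constructor
    · exact ⟨u, hu, by
        show ν u + t * |⟪u, xstar⟫| = (1 + t) * b
        rw [hνu, hinner_u, abs_of_pos hbpos]; ring⟩
    · rintro y ⟨θ, hθ, rfl⟩
      show ν θ + t * |⟪θ, xstar⟫| ≤ (1 + t) * b
      have h1 : ν θ ≤ b := hb.2 ⟨θ, hθ, rfl⟩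
      have h2 := hdual θ
      nlinarith
  have partb2 : LipschitzWith (Real.toNNReal ((1 + t) * b)) (fun x => ν x + t * |⟪x, xstar⟫|) := by
    refine LipschitzWith.of_dist_le_mul fun x y => ?_
    rw [Real.coe_toNNReal _ (by nlinarith : 0 ≤ (1 + t) * b), Real.dist_eq, dist_eq_norm]
    have h1 := hνsub x y
    have h2 : |(|⟪x, xstar⟫| - |⟪y, xstar⟫|)| ≤ b * ‖x - y‖ := by
      refine le_trans (abs_abs_sub_abs_le_abs_sub _ _) ?_
      have h3 : ⟪x, xstar⟫ - ⟪y, xstar⟫ = ⟪x - y, xstar⟫ := (inner_sub_left x y xstar).symm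
      rw [h3]
      calc |⟪x - y, xstar⟫| ≤ ‖x - y‖ * ‖xstar‖ := abs_real_inner_le_norm _ _
        _ = b * ‖x - y‖ := by rw [hxs]; ring
    calc |ν x + t * |⟪x, xstar⟫| - (ν y + t * |⟪y, xstar⟫|)|
        = |(ν x - ν y) + t * (|⟪x, xstar⟫| - |⟪y, xstar⟫|)| := by ring_nf
      _ ≤ |ν x - ν y| + |t * (|⟪x, xstar⟫| - |⟪y, xstar⟫|)| := abs_add_le _ _
      _ = |ν x - ν y| + t * |(|⟪x, xstar⟫| - |⟪y, xstar⟫|)| := by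
          rw [abs_mul, abs_of_pos ht]
      _ ≤ b * ‖x - y‖ + t * (b * ‖x - y‖) := by
          refine add_le_add h1 (mul_le_mul_of_nonneg_left h2 ht.le)
      _ = (1 + t) * b * ‖x - y‖ := by ring
  -- integrability
  have hν_cont : Continuous ν := by
    have hlip : LipschitzWith (Real.toNNReal b) ν := by
      refine LipschitzWith.of_dist_le_mul fun x y => ?_
      rw [Real.coe_toNNReal _ hbpos.le, Real.dist_eq, dist_eq_norm]
      exact hνsub x y
    exact hlip.continuous
  have hsum_int : MeasureTheory.Integrable
      (fun z : EuclideanSpace ℝ (Fin n) => b * ∑ i, |z i|) (stdGaussian n) :=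
    (MeasureTheory.integrable_finset_sum Finset.univ
      (fun i _ => aux_coord_integrable i)).const_mul b
  have hν_int : MeasureTheory.Integrable ν (stdGaussian n) := by
    refine hsum_int.mono' hν_cont.aestronglyMeasurable ?_
    filter_upwards with z
    rw [Real.norm_eq_abs, abs_of_nonneg (hνnonneg z)]
    calc ν z ≤ b * ‖z‖ := hνb z
      _ ≤ b * ∑ i, |z i| := mul_le_mul_of_nonneg_left (aux_norm_le_sum z) hbpos.le
  have hip_cont : Continuous (fun z : EuclideanSpace ℝ (Fin n) => |⟪z, xstar⟫|) :=
    (continuous_id.inner continuous_const).abs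
  have hip_int : MeasureTheory.Integrable
      (fun z : EuclideanSpace ℝ (Fin n) => |⟪z, xstar⟫|) (stdGaussian n) := by
    refine hν_int.mono' hip_cont.aestronglyMeasurable ?_
    filter_upwards with z
    rw [Real.norm_eq_abs, abs_abs]
    exact hdual z
  -- part (c)
  have hI2 : ∫ z, |⟪z, xstar⟫| ∂stdGaussian n = b * Real.sqrt (2 / π) := by
    have heq : (fun z : EuclideanSpace ℝ (Fin n) => |⟪z, xstar⟫|)
        = fun z => b * |⟪z, u⟫| := by
      funext z
      rw [← hbu, real_inner_smul_right, abs_mul, abs_of_pos hbpos]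
    rw [heq, MeasureTheory.integral_const_mul, aux_inner_integral u hu]
  have hInonneg : 0 ≤ ∫ z, ν z ∂stdGaussian n :=
    MeasureTheory.integral_nonneg fun z => hνnonneg z
  have partc : ∫ z, (ν z + t * |⟪z, xstar⟫|) ∂stdGaussian n =
      b * Real.sqrt (((∫ z, ν z ∂stdGaussian n) / b) ^ 2) + t * b * Real.sqrt (2 / π) := by
    rw [MeasureTheory.integral_add hν_int (hip_int.const_mul t),
      MeasureTheory.integral_const_mul, hI2,
      Real.sqrt_sq (div_nonneg hInonneg hbpos.le)]
    field_simp
  exact ⟨parta, ⟨partb1, partb2⟩, partc⟩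
end

section
/- Let α ≥ 2 and define g_α(t) = c_α (t − α)₊ on ℝ with c_α = (1 − Φ(α))^{−1/2}. Then ∫ (g_α′(t))² dγ(t) = 1, Var_γ(g_α) ≍ α⁻² (up to universal constants), and hence the super-concentration constant s(g_α) = √(Var_γ(g_α)) / ‖g_α′‖_{L²(γ)} satisfies s(g_α) ≍ 1/α. -/
set_option maxHeartbeats 1000000

open MeasureTheory ProbabilityTheory Real Set Filter
open scoped NNReal ENNReal


open MeasureTheory ProbabilityTheory Real

/-- The standard Gaussian measure on `ℝ`. -/
noncomputable def stdGaussianR : Measure ℝ := gaussianReal 0 1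

/-- The standard normal cumulative distribution function. -/
noncomputable def Phi (x : ℝ) : ℝ := (stdGaussianR (Set.Iic x)).toReal

namespace Stmt18

noncomputable def P (x : ℝ) : ℝ := (Real.sqrt (2 * π))⁻¹ * Real.exp (-x^2/2)

lemma P_pos (x : ℝ) : 0 < P x := by
  have : (0:ℝ) < Real.sqrt (2 * π) := Real.sqrt_pos.2 (by positivity)
  exact mul_pos (inv_pos.2 this) (Real.exp_pos _)

lemma P_nonneg (x : ℝ) : 0 ≤ P x := (P_pos x).le

lemma continuous_P : Continuous P := by
  unfold P
  fun_prop

lemma pdf_eq (x : ℝ) : gaussianPDFReal 0 1 x = P x := by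
  simp [gaussianPDFReal, P]

lemma std_eq : stdGaussianR =
    volume.withDensity (fun x => ((Real.toNNReal (P x) : ℝ≥0) : ℝ≥0∞)) := by
  rw [stdGaussianR, gaussianReal_of_var_ne_zero 0 one_ne_zero]
  congr 1
  funext x
  rw [gaussianPDF, pdf_eq]
  rfl

lemma integral_std (g : ℝ → ℝ) : ∫ x, g x ∂stdGaussianR = ∫ x, P x * g x := by
  rw [std_eq, integral_withDensity_eq_integral_smul
    (continuous_P.measurable.real_toNNReal) g]
  congr 1
  funext x
  rw [NNReal.smul_def, Real.coe_toNNReal _ (P_nonneg x), smul_eq_mul]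

lemma integrable_std {g : ℝ → ℝ} (h : Integrable (fun x => P x * g x) volume) :
    Integrable g stdGaussianR := by
  rw [std_eq, integrable_withDensity_iff_integrable_coe_smul
    (continuous_P.measurable.real_toNNReal)]
  refine h.congr (Eventually.of_forall fun x => ?_)
  show P x * g x = _ • g x
  rw [smul_eq_mul, Real.coe_toNNReal _ (P_nonneg x)]

lemma meas_Ioi (a : ℝ) : (stdGaussianR (Set.Ioi a)).toReal = ∫ x in Set.Ioi a, P x := by
  rw [stdGaussianR, gaussianReal_apply_eq_integral 0 one_ne_zero,
    ENNReal.toReal_ofReal]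
  · exact setIntegral_congr_fun measurableSet_Ioi fun x _ => pdf_eq x
  · exact setIntegral_nonneg measurableSet_Ioi fun x _ => gaussianPDFReal_nonneg 0 1 x


lemma integrable_abs_pow_gauss (n : ℕ) :
    Integrable (fun x : ℝ => |x| ^ n * Real.exp (-x^2/2)) volume := by
  have hint : Integrable (fun x : ℝ => Real.exp ((n:ℝ)^2) * Real.exp (-(1/4 : ℝ) * x^2))
      volume := (integrable_exp_neg_mul_sq (by norm_num)).const_mul _
  refine hint.mono' ?_ (Eventually.of_forall fun x => ?_)
  · exact ((continuous_abs.pow n).mul (by fun_prop)).aestronglyMeasurable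
  · have h1 : |x| ^ n ≤ Real.exp ((n:ℝ) * |x|) := by
      calc |x| ^ n ≤ Real.exp |x| ^ n :=
            pow_le_pow_left₀ (abs_nonneg x) (by linarith [Real.add_one_le_exp |x|]) n
        _ = Real.exp ((n:ℝ) * |x|) := by
            rw [← Real.exp_nat_mul]
    have h2 : (n:ℝ) * |x| - x^2/2 ≤ (n:ℝ)^2 - x^2/4 := by
      nlinarith [sq_nonneg ((n:ℝ) - |x|/2), sq_abs x]
    have hx : ‖|x| ^ n * Real.exp (-x^2/2)‖ = |x| ^ n * Real.exp (-x^2/2) := by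
      rw [norm_eq_abs, abs_of_nonneg (by positivity)]
    rw [hx]
    calc |x| ^ n * Real.exp (-x^2/2) ≤ Real.exp ((n:ℝ) * |x|) * Real.exp (-x^2/2) := by
          apply mul_le_mul_of_nonneg_right h1 (Real.exp_pos _).le
      _ = Real.exp ((n:ℝ) * |x| - x^2/2) := by rw [← Real.exp_add]; ring_nf
      _ ≤ Real.exp ((n:ℝ)^2 - x^2/4) := Real.exp_le_exp.2 h2
      _ = Real.exp ((n:ℝ)^2) * Real.exp (-(1/4 : ℝ) * x^2) := by
          rw [← Real.exp_add]; ring_nf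

lemma integrable_P_mul {g : ℝ → ℝ} (n : ℕ) (hm : AEStronglyMeasurable g volume)
    (hb : ∀ x, |g x| ≤ |x| ^ n) : Integrable (fun x => P x * g x) volume := by
  refine (integrable_abs_pow_gauss n).mono' ((continuous_P.aestronglyMeasurable).mul hm)
    (Eventually.of_forall fun x => ?_)
  have h1 : (Real.sqrt (2 * π))⁻¹ ≤ 1 := by
    rw [inv_le_one_iff₀]
    right
    rw [show (1:ℝ) = Real.sqrt 1 by simp]
    exact Real.sqrt_le_sqrt (by nlinarith [Real.pi_gt_three])
  have h2 : ‖P x * g x‖ ≤ P x * |x| ^ n := by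
    rw [norm_eq_abs, abs_mul, abs_of_nonneg (P_nonneg x)]
    exact mul_le_mul_of_nonneg_left (hb x) (P_nonneg x)
  refine h2.trans ?_
  unfold P
  calc (Real.sqrt (2 * π))⁻¹ * Real.exp (-x^2/2) * |x| ^ n
      ≤ 1 * Real.exp (-x^2/2) * |x| ^ n := by
        apply mul_le_mul_of_nonneg_right (mul_le_mul_of_nonneg_right h1 (Real.exp_pos _).le)
          (by positivity)
    _ = |x| ^ n * Real.exp (-x^2/2) := by ring

lemma integrable_P_pow (k : ℕ) : Integrable (fun x => P x * x ^ k) volume := by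
  refine integrable_P_mul k (by fun_prop) fun x => ?_
  rw [abs_pow]

lemma tendsto_exp_gauss : Tendsto (fun x : ℝ => Real.exp (-x^2/2)) atTop (nhds 0) := by
  apply Real.tendsto_exp_atBot.comp
  have h : Tendsto (fun x : ℝ => x^2/2) atTop atTop :=
    (tendsto_pow_atTop (two_ne_zero)).atTop_div_const (by norm_num)
  have := tendsto_neg_atTop_atBot.comp h
  refine this.congr fun x => ?_
  simp [neg_div]

lemma tendsto_x2_exp_gauss : Tendsto (fun x : ℝ => x^2 * Real.exp (-x^2/2)) atTop (nhds 0) := by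
  have h : Tendsto (fun x : ℝ => x^2/2) atTop atTop :=
    (tendsto_pow_atTop (two_ne_zero)).atTop_div_const (by norm_num)
  have h2 : Tendsto (fun u : ℝ => 2 * (u ^ 1 * Real.exp (-u))) atTop (nhds 0) := by
    simpa using (tendsto_pow_mul_exp_neg_atTop_nhds_zero 1).const_mul 2
  refine (h2.comp h).congr fun x => ?_
  simp only [Function.comp_apply, pow_one]
  rw [show -(x^2/2) = -x^2/2 by ring]
  ring

lemma tendsto_x_exp_gauss : Tendsto (fun x : ℝ => x * Real.exp (-x^2/2)) atTop (nhds 0) := by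
  refine squeeze_zero' ?_ ?_ tendsto_x2_exp_gauss
  · filter_upwards [eventually_ge_atTop (0:ℝ)] with x hx
    positivity
  · filter_upwards [eventually_ge_atTop (1:ℝ)] with x hx
    have : x ≤ x^2 := by nlinarith
    exact mul_le_mul_of_nonneg_right this (Real.exp_pos _).le

lemma tendsto_P0 : Tendsto P atTop (nhds 0) := by
  have := tendsto_exp_gauss.const_mul (Real.sqrt (2 * π))⁻¹
  rw [mul_zero] at this
  exact this

lemma tendsto_xP : Tendsto (fun x => x * P x) atTop (nhds 0) := by
  have := tendsto_x_exp_gauss.const_mul (Real.sqrt (2 * π))⁻¹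
  rw [mul_zero] at this
  refine this.congr fun x => ?_
  unfold P; ring

lemma tendsto_x2P : Tendsto (fun x => x^2 * P x) atTop (nhds 0) := by
  have := tendsto_x2_exp_gauss.const_mul (Real.sqrt (2 * π))⁻¹
  rw [mul_zero] at this
  refine this.congr fun x => ?_
  unfold P; ring

lemma hasDerivAt_P (x : ℝ) : HasDerivAt P (-x * P x) x := by
  have h1 : HasDerivAt (fun x : ℝ => -x^2/2) (-x) x := by
    have := ((hasDerivAt_pow 2 x).neg).div_const 2
    simpa using this.congr_deriv (by ring)
  have h2 := (h1.exp).const_mul (Real.sqrt (2 * π))⁻¹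
  refine h2.congr_deriv ?_
  unfold P; ring

lemma T1 (a : ℝ) : ∫ x in Set.Ioi a, x * P x = P a := by
  have h := integral_Ioi_of_hasDerivAt_of_tendsto' (f := fun x => -P x)
    (f' := fun x => x * P x) (a := a)
    (fun x _ => by exact ((hasDerivAt_P x).neg).congr_deriv (by ring))
    (((integrable_P_pow 1).congr (Eventually.of_forall fun x => by ring)).integrableOn)
    (by simpa using tendsto_P0.neg)
  simpa using h

lemma T2 (a : ℝ) : ∫ x in Set.Ioi a, (x^2 - 1) * P x = a * P a := by
  have h := integral_Ioi_of_hasDerivAt_of_tendsto' (f := fun x => -x * P x)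
    (f' := fun x => (x^2 - 1) * P x) (a := a)
    (fun x _ => by
      have := ((hasDerivAt_id x).neg).mul (hasDerivAt_P x)
      refine this.congr_deriv ?_
      simp only [Pi.neg_apply, id_eq]
      ring)
    (((((integrable_P_pow 2).sub (integrable_P_pow 0))).congr
      (Eventually.of_forall fun x => by simp only [Pi.sub_apply]; ring)).integrableOn)
    (by
      have := tendsto_xP.neg
      rw [neg_zero] at this
      refine this.congr fun x => by ring)
  simpa using h

lemma T3 (a : ℝ) : ∫ x in Set.Ioi a, x^3 * P x = (a^2 + 2) * P a := by
  have h := integral_Ioi_of_hasDerivAt_of_tendsto' (f := fun x => -(x^2 + 2) * P x)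
    (f' := fun x => x^3 * P x) (a := a)
    (fun x _ => by
      have hx : HasDerivAt (fun x : ℝ => -(x^2 + 2)) (-(2*x)) x := by
        have := ((hasDerivAt_pow 2 x).add_const 2).neg
        exact this.congr_deriv (by norm_num)
      have := hx.mul (hasDerivAt_P x)
      refine this.congr_deriv ?_
      ring)
    (((integrable_P_pow 3).congr (Eventually.of_forall fun x => by ring)).integrableOn)
    (by
      have h1 := tendsto_x2P.neg
      have h2 := (tendsto_P0.const_mul (2:ℝ)).neg
      have := h1.add h2
      simp only [neg_zero, mul_zero, add_zero] at this
      refine this.congr fun x => by ring)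
  rw [h]
  ring


noncomputable def Q (a : ℝ) : ℝ := ∫ x in Set.Ioi a, P x

lemma meas_Ioi_eq_Q (a : ℝ) : (stdGaussianR (Set.Ioi a)).toReal = Q a := meas_Ioi a

lemma ion0 (a : ℝ) : IntegrableOn P (Set.Ioi a) volume := by
  have h : Integrable P volume :=
    (integrable_P_pow 0).congr (Eventually.of_forall fun x =>
      (by ring : P x * x ^ 0 = P x))
  exact h.integrableOn

lemma ion1 (a : ℝ) : IntegrableOn (fun x => x * P x) (Set.Ioi a) volume := by
  have h : Integrable (fun x => x * P x) volume :=
    (integrable_P_pow 1).congr (Eventually.of_forall fun x =>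
      (by ring : P x * x ^ 1 = x * P x))
  exact h.integrableOn

lemma ion2 (a : ℝ) : IntegrableOn (fun x => (x^2 - 1) * P x) (Set.Ioi a) volume := by
  have h : Integrable (fun x => (x^2 - 1) * P x) volume :=
    ((integrable_P_pow 2).sub (integrable_P_pow 0)).congr (Eventually.of_forall fun x =>
      (by simp only [Pi.sub_apply]; ring :
        ((fun x => P x * x ^ 2) - fun x => P x * x ^ 0) x = (x^2 - 1) * P x))
  exact h.integrableOn

lemma ion3 (a : ℝ) : IntegrableOn (fun x => x^3 * P x) (Set.Ioi a) volume := by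
  have h : Integrable (fun x => x^3 * P x) volume :=
    (integrable_P_pow 3).congr (Eventually.of_forall fun x =>
      (by ring : P x * x ^ 3 = x^3 * P x))
  exact h.integrableOn

lemma MA (a : ℝ) : ∫ x, P x * max (x - a) 0 = P a - a * Q a := by
  have h1 : ∫ x, P x * max (x - a) 0 = ∫ x in Set.Ioi a, P x * max (x - a) 0 :=
    (setIntegral_eq_integral_of_forall_compl_eq_zero (fun x hx => by
      have : x ≤ a := not_lt.1 (by simpa using hx)
      simp [max_eq_right (by linarith : x - a ≤ 0)])).symm
  rw [h1, setIntegral_congr_fun measurableSet_Ioi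
    (fun x hx => show P x * max (x - a) 0 = x * P x - a * P x by
      rw [max_eq_left (by simp only [Set.mem_Ioi] at hx; linarith : (0:ℝ) ≤ x - a)]; ring),
    integral_sub (ion1 a) ((ion0 a).const_mul a), T1, integral_const_mul]
  rfl

lemma MB (a : ℝ) : ∫ x, P x * max (x - a) 0 ^ 2 = (a^2 + 1) * Q a - a * P a := by
  have h1 : ∫ x, P x * max (x - a) 0 ^ 2 = ∫ x in Set.Ioi a, P x * max (x - a) 0 ^ 2 :=
    (setIntegral_eq_integral_of_forall_compl_eq_zero (fun x hx => by
      have : x ≤ a := not_lt.1 (by simpa using hx)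
      simp [max_eq_right (by linarith : x - a ≤ 0)])).symm
  have hA : Integrable (fun x => (x^2 - 1) * P x - (2*a) * (x * P x))
      (volume.restrict (Set.Ioi a)) := (ion2 a).sub ((ion1 a).const_mul (2*a))
  have hB : Integrable (fun x => (a^2 + 1) * P x)
      (volume.restrict (Set.Ioi a)) := (ion0 a).const_mul _
  rw [h1, setIntegral_congr_fun measurableSet_Ioi
    (fun x hx => show P x * max (x - a) 0 ^ 2
        = ((x^2 - 1) * P x - (2*a) * (x * P x)) + (a^2 + 1) * P x by
      rw [max_eq_left (by simp only [Set.mem_Ioi] at hx; linarith : (0:ℝ) ≤ x - a)]; ring),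
    integral_add hA hB,
    integral_sub (ion2 a) ((ion1 a).const_mul (2*a)),
    T2, integral_const_mul, integral_const_mul, T1]
  show a * P a - 2 * a * P a + (a ^ 2 + 1) * Q a = _
  ring

lemma MC (a : ℝ) :
    ∫ x in Set.Ioi a, P x * (x - a) ^ 3 = (a^2 + 2) * P a - (a^3 + 3*a) * Q a := by
  have hA : Integrable (fun x => x^3 * P x - (3*a) * ((x^2 - 1) * P x)
      + (3*a^2) * (x * P x)) (volume.restrict (Set.Ioi a)) :=
    ((ion3 a).sub ((ion2 a).const_mul (3*a))).add ((ion1 a).const_mul (3*a^2))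
  have hB : Integrable (fun x => (a^3 + 3*a) * P x)
      (volume.restrict (Set.Ioi a)) := (ion0 a).const_mul _
  have hC : Integrable (fun x => x^3 * P x - (3*a) * ((x^2 - 1) * P x))
      (volume.restrict (Set.Ioi a)) := (ion3 a).sub ((ion2 a).const_mul (3*a))
  rw [setIntegral_congr_fun measurableSet_Ioi
    (fun x _ => show P x * (x - a) ^ 3
        = (x^3 * P x - (3*a) * ((x^2 - 1) * P x) + (3*a^2) * (x * P x))
          - (a^3 + 3*a) * P x by ring),
    integral_sub hA hB,
    integral_add hC ((ion1 a).const_mul (3*a^2)),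
    integral_sub (ion3 a) ((ion2 a).const_mul (3*a)),
    T3, integral_const_mul, integral_const_mul, integral_const_mul, T2, T1]
  show (a ^ 2 + 2) * P a - 3 * a * (a * P a) + 3 * a ^ 2 * P a - (a ^ 3 + 3 * a) * Q a = _
  ring

lemma qb1 (a : ℝ) : a * Q a ≤ P a := by
  have h : 0 ≤ ∫ x, P x * max (x - a) 0 :=
    integral_nonneg fun x => mul_nonneg (P_nonneg x) (le_max_right _ _)
  rw [MA] at h
  linarith

lemma qb2 (a : ℝ) : a * P a ≤ (a^2 + 1) * Q a := by
  have h : 0 ≤ ∫ x, P x * max (x - a) 0 ^ 2 :=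
    integral_nonneg fun x => mul_nonneg (P_nonneg x) (sq_nonneg _)
  rw [MB] at h
  linarith

lemma qb3 (a : ℝ) : (a^3 + 3*a) * Q a ≤ (a^2 + 2) * P a := by
  have h : 0 ≤ ∫ x in Set.Ioi a, P x * (x - a) ^ 3 :=
    setIntegral_nonneg measurableSet_Ioi fun x hx =>
      mul_nonneg (P_nonneg x)
        (pow_nonneg (by simp only [Set.mem_Ioi] at hx; linarith) 3)
  rw [MC] at h
  linarith

lemma Q_pos (a : ℝ) (ha : 0 < a) : 0 < Q a := by
  have h := qb2 a
  nlinarith [P_pos a, sq_nonneg a]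


instance : IsProbabilityMeasure stdGaussianR := by
  unfold stdGaussianR; infer_instance

lemma cont_g0 (a : ℝ) : Continuous (fun t : ℝ => max (t - a) 0) :=
  (continuous_id.sub continuous_const).max continuous_const

lemma g0_abs_le (a : ℝ) (ha : 0 ≤ a) (x : ℝ) : |max (x - a) 0| ≤ |x| ^ 1 := by
  rw [pow_one, abs_of_nonneg (le_max_right _ _)]
  rcases le_or_gt x a with h | h
  · rw [max_eq_right (by linarith)]; positivity
  · rw [max_eq_left (by linarith)]
    calc x - a ≤ x := by linarith
      _ ≤ |x| := le_abs_self x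

lemma g0sq_abs_le (a : ℝ) (ha : 0 ≤ a) (x : ℝ) : |max (x - a) 0 ^ 2| ≤ |x| ^ 2 := by
  rw [abs_pow]
  exact pow_le_pow_left₀ (abs_nonneg _) (by simpa using g0_abs_le a ha x) 2

lemma int_g0 (a : ℝ) (ha : 0 ≤ a) :
    Integrable (fun t => max (t - a) 0) stdGaussianR :=
  integrable_std (integrable_P_mul 1 (cont_g0 a).aestronglyMeasurable (g0_abs_le a ha))

lemma int_g0sq (a : ℝ) (ha : 0 ≤ a) :
    Integrable (fun t => max (t - a) 0 ^ 2) stdGaussianR :=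
  integrable_std (integrable_P_mul 2 ((cont_g0 a).pow 2).aestronglyMeasurable
    (g0sq_abs_le a ha))

lemma memlp_g0 (a : ℝ) (ha : 0 ≤ a) :
    MemLp (fun t => max (t - a) 0) 2 stdGaussianR :=
  (memLp_two_iff_integrable_sq
    ((cont_g0 a).aestronglyMeasurable)).2 (int_g0sq a ha)

lemma E1 (a : ℝ) : ∫ t, max (t - a) 0 ∂stdGaussianR = P a - a * Q a := by
  rw [integral_std]; exact MA a

lemma E2 (a : ℝ) : ∫ t, max (t - a) 0 ^ 2 ∂stdGaussianR = (a^2 + 1) * Q a - a * P a := by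
  rw [integral_std]; exact MB a

lemma varg0 (a : ℝ) (ha : 0 ≤ a) :
    variance (fun t => max (t - a) 0) stdGaussianR
      = ((a^2 + 1) * Q a - a * P a) - (P a - a * Q a)^2 := by
  rw [variance_eq_sub (memlp_g0 a ha)]
  have h2 : (∫ t, ((fun t => max (t - a) 0) ^ 2) t ∂stdGaussianR)
      = (a^2 + 1) * Q a - a * P a := by
    rw [← E2 a]
    congr 1
  rw [h2, E1]

lemma var_as_integral (a : ℝ) (ha : 0 ≤ a) :
    variance (fun t => max (t - a) 0) stdGaussianR
      = ∫ t, (max (t - a) 0 - (P a - a * Q a))^2 ∂stdGaussianR := by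
  set m := P a - a * Q a with hm
  have hfun : (fun t => (max (t - a) 0 - m)^2)
      = fun t => (max (t - a) 0 ^ 2 - (2*m) * max (t - a) 0) + m^2 :=
    funext fun t => by ring
  have hInt1 : Integrable (fun t => max (t - a) 0 ^ 2 - (2*m) * max (t - a) 0)
      stdGaussianR := (int_g0sq a ha).sub ((int_g0 a ha).const_mul (2*m))
  rw [hfun, integral_add hInt1 (integrable_const _),
    integral_sub (int_g0sq a ha) ((int_g0 a ha).const_mul (2*m)),
    E2, integral_const_mul, E1, integral_const, varg0 a ha]
  simp only [probReal_univ, measure_univ, ENNReal.toReal_one, smul_eq_mul, one_mul]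
  ring

lemma int_shift_sq (a : ℝ) (ha : 0 ≤ a) (m : ℝ) :
    Integrable (fun t => (max (t - a) 0 - m)^2) stdGaussianR := by
  have hfun : (fun t => (max (t - a) 0 - m)^2)
      = fun t => (max (t - a) 0 ^ 2 - (2*m) * max (t - a) 0) + m^2 :=
    funext fun t => by ring
  rw [hfun]
  exact ((int_g0sq a ha).sub ((int_g0 a ha).const_mul (2*m))).add (integrable_const _)


lemma exp_two_lt : Real.exp 2 < 7.393 := by
  have h := Real.exp_one_lt_d9
  have h2 : Real.exp 2 = Real.exp 1 * Real.exp 1 := by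
    rw [← Real.exp_add]; norm_num
  nlinarith [Real.exp_pos 1]

lemma exp_two_gt : (7.38 : ℝ) < Real.exp 2 := by
  have h := Real.exp_one_gt_d9
  have h2 : Real.exp 2 = Real.exp 1 * Real.exp 1 := by
    rw [← Real.exp_add]; norm_num
  nlinarith [Real.exp_pos 1]

lemma sqrt2pi_gt : (2.5 : ℝ) < Real.sqrt (2 * π) := by
  have hpi := Real.pi_gt_d6
  have h : (2.5:ℝ)^2 < 2 * π := by nlinarith
  exact (Real.lt_sqrt (by norm_num)).2 h

lemma Pa_le_006 (a : ℝ) (ha : 2 ≤ a) : P a ≤ 0.06 := by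
  have h1 : Real.exp (-a^2/2) ≤ Real.exp (-2) := Real.exp_le_exp.2 (by nlinarith)
  have h2 : Real.exp (-2) ≤ 1/7.38 := by
    rw [Real.exp_neg]
    have := exp_two_gt
    rw [show (1:ℝ)/7.38 = (7.38:ℝ)⁻¹ by norm_num,
      inv_le_inv₀ (Real.exp_pos 2) (by norm_num)]
    linarith
  have h3 : (Real.sqrt (2 * π))⁻¹ ≤ 1/2.5 := by
    have := sqrt2pi_gt
    rw [show (1:ℝ)/2.5 = (2.5:ℝ)⁻¹ by norm_num,
      inv_le_inv₀ (by positivity) (by norm_num)]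
    linarith
  unfold P
  calc (Real.sqrt (2 * π))⁻¹ * Real.exp (-a^2/2)
      ≤ (1/2.5) * (1/7.38) := by
        apply mul_le_mul h3 (h1.trans h2) (Real.exp_pos _).le (by norm_num)
    _ ≤ 0.06 := by norm_num

lemma P_ratio (a : ℝ) (ha : 2 ≤ a) : P a ≤ 7.4 * P (a + 1/a) := by
  have ha0 : (0:ℝ) < a := by linarith
  have hkey : P (a + 1/a) = P a * Real.exp (-(1 + 1/(2*a^2))) := by
    unfold P
    rw [mul_assoc, ← Real.exp_add]
    congr 2
    field_simp
    ring
  have hexp : 1/7.4 ≤ Real.exp (-(1 + 1/(2*a^2))) := by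
    have h1 : (1 + 1/(2*a^2)) ≤ 2 := by
      have : 1/(2*a^2) ≤ 1/8 := by
        apply div_le_div_of_nonneg_left (by norm_num) (by norm_num) (by nlinarith)
      linarith
    have h2 : Real.exp (1 + 1/(2*a^2)) ≤ Real.exp 2 := Real.exp_le_exp.2 h1
    rw [Real.exp_neg, show (1:ℝ)/7.4 = (7.4:ℝ)⁻¹ by norm_num,
      inv_le_inv₀ (by norm_num) (Real.exp_pos _)]
    linarith [exp_two_lt]
  have hP := P_pos a
  calc P a = P a * 1 := by ring
    _ ≤ P a * (7.4 * Real.exp (-(1 + 1/(2*a^2)))) := by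
        apply mul_le_mul_of_nonneg_left ?_ hP.le
        linarith
    _ = 7.4 * P (a + 1/a) := by rw [hkey]; ring

lemma var_upper (a : ℝ) (ha : 2 ≤ a) :
    variance (fun t => max (t - a) 0) stdGaussianR ≤ 2 * Q a / a^2 := by
  have ha0 : (0:ℝ) < a := by linarith
  rw [varg0 a ha0.le]
  have h3 := qb3 a
  have hQ := Q_pos a ha0
  have hP := P_pos a
  have key : a^2 * ((a^2 + 1) * Q a - a * P a) ≤ 2 * Q a := by
    nlinarith [mul_le_mul_of_nonneg_left h3 (by positivity : (0:ℝ) ≤ a^3), hQ.le, hP.le]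
  rw [le_div_iff₀ (by positivity : (0:ℝ) < a^2)]
  nlinarith [key, sq_nonneg (P a - a * Q a), sq_nonneg a,
    mul_le_mul_of_nonneg_left (sq_nonneg (P a - a * Q a)) (by positivity : (0:ℝ) ≤ a^2)]

lemma var_lower (a : ℝ) (ha : 2 ≤ a) :
    Q a / (15 * a^2) ≤ variance (fun t => max (t - a) 0) stdGaussianR := by
  have ha0 : (0:ℝ) < a := by linarith
  set b := a + 1/a with hb
  set m := P a - a * Q a with hm
  have hb0 : 0 < b := by positivity
  have hba : a < b := by
    rw [hb]; linarith [one_div_pos.2 ha0]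
  have hQ := Q_pos a ha0
  have hQb := Q_pos b hb0
  have hPb := P_pos b
  have hPa := P_pos a
  have hm0 : 0 ≤ m := by
    have h := qb1 a
    rw [hm]; linarith
  have hm1 : m ≤ 0.03 / a := by
    have h2 := qb2 a
    have hPle := Pa_le_006 a ha
    rw [hm, le_div_iff₀ ha0]
    nlinarith [mul_le_mul_of_nonneg_left h2 ha0.le, hQ.le, hPa.le, sq_nonneg (a - 1)]
  have hs0 : 0 ≤ 1/a - m := by
    have h1 : (0.03:ℝ)/a ≤ 1/a := by
      gcongr
      norm_num
    linarith
  have ham : a * m ≤ 0.03 := by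
    have h := mul_le_mul_of_nonneg_left hm1 ha0.le
    have h2 : a * (0.03 / a) = 0.03 := by field_simp
    linarith
  have has : (0.97:ℝ) ≤ a * (1/a - m) := by
    have h1 : a * (1/a - m) = 1 - a * m := by field_simp
    rw [h1]; linarith
  have hQbge : Q a ≤ 13.5 * Q b := by
    have hu2 : 1/a ≤ 1/2 := by gcongr
    have hinv : a * (1/a) = 1 := by field_simp
    have hb2 : b^2 + 1 ≤ (29/16) * a^2 := by
      rw [hb]
      nlinarith [sq_nonneg (1/a), hu2, (one_div_pos.2 ha0).le, ha]
    have h1 : a * Q a ≤ 7.4 * P b := le_trans (qb1 a) (P_ratio a ha)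
    have h3 := qb2 b
    have h4 : a * P b ≤ b * P b := mul_le_mul_of_nonneg_right hba.le hPb.le
    have h5 : a * (a * Q a) ≤ a * (7.4 * P b) := mul_le_mul_of_nonneg_left h1 ha0.le
    have h5c : (b^2+1) * Q b ≤ (29/16 * a^2) * Q b :=
      mul_le_mul_of_nonneg_right hb2 hQb.le
    have h4' := mul_le_mul_of_nonneg_left h4 (by norm_num : (0:ℝ) ≤ 7.4)
    have h3' := mul_le_mul_of_nonneg_left h3 (by norm_num : (0:ℝ) ≤ 7.4)
    have h5c' := mul_le_mul_of_nonneg_left h5c (by norm_num : (0:ℝ) ≤ 7.4)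
    have h6 : a^2 * Q a ≤ 7.4 * ((29/16) * a^2) * Q b := by
      nlinarith [h5, h4', h3', h5c']
    nlinarith [h6, mul_pos (mul_pos ha0 ha0) hQb, mul_pos ha0 ha0]
  have h97 : (0.9409:ℝ) ≤ (a * (1/a - m))^2 := by nlinarith [has]
  have hfinal : Q a / (15 * a^2) ≤ (1/a - m)^2 * Q b := by
    rw [div_le_iff₀ (by positivity : (0:ℝ) < 15 * a^2)]
    have hexp : (1/a - m)^2 * Q b * (15 * a^2) = 15 * ((a * (1/a - m))^2 * Q b) := by
      ring
    rw [hexp]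
    nlinarith [mul_le_mul_of_nonneg_right h97 hQb.le, hQbge]
  have hstep1 : ∫ t in Set.Ioi b, (max (t - a) 0 - m)^2 ∂stdGaussianR
      ≤ ∫ t, (max (t - a) 0 - m)^2 ∂stdGaussianR :=
    setIntegral_le_integral (int_shift_sq a ha0.le m)
      (Eventually.of_forall fun t => sq_nonneg _)
  have hconst : ∫ _ in Set.Ioi b, (1/a - m)^2 ∂stdGaussianR = Q b * (1/a - m)^2 := by
    rw [setIntegral_const, measureReal_def, meas_Ioi_eq_Q b, smul_eq_mul]
  have hmono : ∫ _ in Set.Ioi b, (1/a - m)^2 ∂stdGaussianR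
      ≤ ∫ t in Set.Ioi b, (max (t - a) 0 - m)^2 ∂stdGaussianR := by
    apply setIntegral_mono_on ((integrable_const _).integrableOn)
      ((int_shift_sq a ha0.le m).integrableOn) measurableSet_Ioi
    intro t ht
    rw [Set.mem_Ioi] at ht
    have hbt : a + 1/a < t := by rw [hb] at ht; exact ht
    have h2 : max (t - a) 0 = t - a :=
      max_eq_left (by linarith [one_div_pos.2 ha0])
    apply pow_le_pow_left₀ hs0 (by rw [h2]; linarith) 2
  have hvar : variance (fun t => max (t - a) 0) stdGaussianR
      = ∫ t, (max (t - a) 0 - m)^2 ∂stdGaussianR := by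
    rw [var_as_integral a ha0.le]
  rw [hvar]
  calc Q a / (15 * a^2) ≤ (1/a - m)^2 * Q b := hfinal
    _ = ∫ _ in Set.Ioi b, (1/a - m)^2 ∂stdGaussianR := by rw [hconst]; ring
    _ ≤ ∫ t in Set.Ioi b, (max (t - a) 0 - m)^2 ∂stdGaussianR := hmono
    _ ≤ ∫ t, (max (t - a) 0 - m)^2 ∂stdGaussianR := hstep1

lemma one_sub_Phi (a : ℝ) : 1 - Phi a = Q a := by
  have hc : stdGaussianR (Set.Iic a) + stdGaussianR (Set.Ioi a)
      = stdGaussianR Set.univ := by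
    rw [← Set.compl_Iic]
    exact measure_add_measure_compl measurableSet_Iic
  rw [measure_univ] at hc
  have h1 := congrArg ENNReal.toReal hc
  rw [ENNReal.toReal_add (measure_ne_top _ _) (measure_ne_top _ _),
    ENNReal.toReal_one, meas_Ioi_eq_Q] at h1
  rw [Phi] at *
  linarith

lemma part1 (a : ℝ) (ha : 2 ≤ a) :
    ∫ s, (Set.indicator (Set.Ioi a)
      (fun _ => (Real.sqrt (1 - Phi a))⁻¹) s) ^ 2 ∂stdGaussianR = 1 := by
  have hQ : 0 < Q a := Q_pos a (by linarith)
  have hphi : 1 - Phi a = Q a := one_sub_Phi a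
  have hfun : (fun s => (Set.indicator (Set.Ioi a)
        (fun _ => (Real.sqrt (1 - Phi a))⁻¹) s) ^ 2)
      = Set.indicator (Set.Ioi a)
        (fun _ => ((Real.sqrt (1 - Phi a))⁻¹) ^ 2) := by
    funext s
    by_cases h : s ∈ Set.Ioi a <;> simp [Set.indicator_apply, h]
  rw [hfun, integral_indicator_const _ measurableSet_Ioi, smul_eq_mul,
    measureReal_def, meas_Ioi_eq_Q, hphi, inv_pow, Real.sq_sqrt hQ.le]
  exact mul_inv_cancel₀ hQ.ne'

lemma var_scaled (a : ℝ) (ha : 2 ≤ a) :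
    variance (fun t => (Real.sqrt (1 - Phi a))⁻¹ * max (t - a) 0) stdGaussianR
      = (Q a)⁻¹ * variance (fun t => max (t - a) 0) stdGaussianR := by
  have hQ : 0 < Q a := Q_pos a (by linarith)
  rw [variance_const_mul, one_sub_Phi a, inv_pow, Real.sq_sqrt hQ.le]

end Stmt18

/-- The example `g_α(t) = c_α (t − α)₊` with `c_α = (1 − Φ(α))^{−1/2}`: the a.e.
derivative `g_α' = c_α 1_{(α,∞)}` has unit `L²(γ)` norm, `Var_γ(g_α) ≍ α⁻²`, and hence
the super-concentration constant `s(g_α) = √(Var_γ g_α)/‖g_α'‖_{L²(γ)} ≍ 1/α`. -/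
theorem stmt18 :
    ∃ c > (0 : ℝ), ∃ C > (0 : ℝ), ∀ α : ℝ, 2 ≤ α →
      (∫ s, (Set.indicator (Set.Ioi α)
          (fun _ => (Real.sqrt (1 - Phi α))⁻¹) s) ^ 2 ∂stdGaussianR = 1) ∧
      c * α⁻¹ ^ 2 ≤
        variance (fun t => (Real.sqrt (1 - Phi α))⁻¹ * max (t - α) 0) stdGaussianR ∧
      variance (fun t => (Real.sqrt (1 - Phi α))⁻¹ * max (t - α) 0) stdGaussianR ≤
        C * α⁻¹ ^ 2 ∧
      c / α ≤
        Real.sqrt (variance (fun t => (Real.sqrt (1 - Phi α))⁻¹ * max (t - α) 0)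
            stdGaussianR) /
          Real.sqrt (∫ s, (Set.indicator (Set.Ioi α)
            (fun _ => (Real.sqrt (1 - Phi α))⁻¹) s) ^ 2 ∂stdGaussianR) ∧
      Real.sqrt (variance (fun t => (Real.sqrt (1 - Phi α))⁻¹ * max (t - α) 0)
            stdGaussianR) /
          Real.sqrt (∫ s, (Set.indicator (Set.Ioi α)
            (fun _ => (Real.sqrt (1 - Phi α))⁻¹) s) ^ 2 ∂stdGaussianR) ≤
        C / α := by
  refine ⟨1/100, by norm_num, 4, by norm_num, fun α hα => ?_⟩
  have ha0 : (0:ℝ) < α := by linarith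
  have hQ : 0 < Stmt18.Q α := Stmt18.Q_pos α ha0
  have h1 := Stmt18.part1 α hα
  have hvar := Stmt18.var_scaled α hα
  have hup := Stmt18.var_upper α hα
  have hlo := Stmt18.var_lower α hα
  set V := variance (fun t => max (t - α) 0) stdGaussianR with hV
  have hVnn : 0 ≤ V := variance_nonneg _ _
  have hVlo : (1:ℝ)/(15*α^2) ≤ (Stmt18.Q α)⁻¹ * V := by
    have h := mul_le_mul_of_nonneg_left hlo (inv_nonneg.2 hQ.le)
    have e : (Stmt18.Q α)⁻¹ * (Stmt18.Q α/(15*α^2)) = 1/(15*α^2) := by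
      field_simp
    linarith
  have hVup : (Stmt18.Q α)⁻¹ * V ≤ 2/α^2 := by
    have h := mul_le_mul_of_nonneg_left hup (inv_nonneg.2 hQ.le)
    have e : (Stmt18.Q α)⁻¹ * (2 * Stmt18.Q α/α^2) = 2/α^2 := by
      field_simp
    linarith
  have hinv2 : α⁻¹ ^ 2 = 1/α^2 := by
    rw [inv_pow, one_div]
  refine ⟨h1, ?_, ?_, ?_, ?_⟩
  · rw [hvar, hinv2]
    have h15 : (1:ℝ)/100 * (1/α^2) = 1/(100*α^2) := by ring
    have hcomp : (1:ℝ)/(100*α^2) ≤ 1/(15*α^2) :=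
      div_le_div_of_nonneg_left (by norm_num) (by positivity) (by nlinarith)
    linarith
  · rw [hvar, hinv2]
    have h4 : (4:ℝ) * (1/α^2) = 4/α^2 := by ring
    have hcomp : (2:ℝ)/α^2 ≤ 4/α^2 := by
      rw [div_le_div_iff₀ (by positivity) (by positivity)]
      nlinarith
    linarith
  · rw [h1, Real.sqrt_one, div_one, hvar]
    have h4a : 1/(4*α) ≤ Real.sqrt ((Stmt18.Q α)⁻¹ * V) := by
      apply Real.le_sqrt_of_sq_le
      have e : (1/(4*α))^2 = 1/(16*α^2) := by
        rw [div_pow, mul_pow]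
        norm_num
      rw [e]
      have hcomp : (1:ℝ)/(16*α^2) ≤ 1/(15*α^2) :=
        div_le_div_of_nonneg_left (by norm_num) (by positivity) (by nlinarith)
      linarith
    have hsmall : (1:ℝ)/100/α ≤ 1/(4*α) := by
      rw [div_div]
      exact div_le_div_of_nonneg_left (by norm_num) (by positivity) (by nlinarith)
    linarith
  · rw [h1, Real.sqrt_one, div_one, hvar]
    have hle : (Stmt18.Q α)⁻¹ * V ≤ (4/α)^2 := by
      have e : (4/α)^2 = 16/α^2 := by
        rw [div_pow]
        norm_num
      rw [e]
      have hcomp : (2:ℝ)/α^2 ≤ 16/α^2 := by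
        rw [div_le_div_iff₀ (by positivity) (by positivity)]
        nlinarith
      linarith
    calc Real.sqrt ((Stmt18.Q α)⁻¹ * V) ≤ Real.sqrt ((4/α)^2) :=
          Real.sqrt_le_sqrt hle
      _ = 4/α := Real.sqrt_sq (by positivity)
end
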